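/- arXiv:math/0702532 — 3 statements merged into one kernel-verified Lean document; each statement's English description precedes it below -/
import Mathlib

section
/- Let u : [x,y] → ℝ be continuous, piecewise C², with u ≥ u₀ > 1 on [x,y], satisfying u'' = -u on regular points, u'(y) = 0, u increasing on [x,y] with local minimum at x and maximum at y (u(x) ≤ u(s) ≤ u(y)), and suppose the jumps of u' at singular points are nonnegative. Then for all s ∈ [x,y], u(s) ≥ u(y)·cos(y - s), provided y - x < π/2. -/
/-!
Put `W = v·cos(y - ·) - u·sin(y - ·)`, the Wronskian of `cos(y - ·)` and `u`. Since `u'' = -u` on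
each smooth piece, `W` is constant there; at a singular point it jumps by
`(u'(p⁺) - u'(p⁻)) cos(y - p) ≥ 0`, and `W(y) = u'(y) = 0`, so `W ≤ 0` on `[x,y]`. As
`y - x < π/2`, `cos(y - ·) > 0` on `[x,y]`, and the quotient `u / cos(y - ·)` has
derivative `W / cos²(y - ·) ≤ 0`; it is continuous, hence antitone, and its value at `y` is `u(y)`.
-/

open Set Filter Topology Real

theorem antitoneOn_of_finset_gaps {α β : Type*} [LinearOrder α] [Preorder β] {f : α → β}
    {s : Set α} (hs : s.OrdConnected) (S : Finset α)
    (h : ∀ a ∈ s, ∀ b ∈ s, a ≤ b → (∀ t ∈ Ioo a b, t ∉ S) → f b ≤ f a) :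
    AntitoneOn f s := by
  induction S using Finset.induction_on with
  | empty => exact fun a ha b hb hab => h a ha b hb hab fun _ _ => Finset.notMem_empty _
  | insert p S _ ih =>
    refine ih fun a ha b hb hab hfree => ?_
    by_cases hp : p ∈ Ioo a b
    · have hps : p ∈ s := hs.out ha hb (Ioo_subset_Icc_self hp)
      calc f b ≤ f p := h p hps b hb hp.2.le fun t ht htS =>
              (Finset.mem_insert.1 htS).elim (fun h => ht.1.ne' h)
                fun htS => hfree t ⟨hp.1.trans ht.1, ht.2⟩ htS
        _ ≤ f a := h a ha p hps hp.1.le fun t ht htS =>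
              (Finset.mem_insert.1 htS).elim (fun h => ht.2.ne h)
                fun htS => hfree t ⟨ht.1, ht.2.trans hp.2⟩ htS
    · exact h a ha b hb hab fun t ht htS =>
        (Finset.mem_insert.1 htS).elim (fun h => hp (h ▸ ht)) (hfree t ht)

theorem antitoneOn_Icc_of_hasDerivAt_nonpos_off_finset {f f' : ℝ → ℝ} {x y : ℝ} (S : Finset ℝ)
    (hf : ContinuousOn f (Icc x y)) (hf' : ∀ t ∈ Ioo x y \ S, HasDerivAt f (f' t) t)
    (hf'₀ : ∀ t ∈ Ioo x y \ S, f' t ≤ 0) : AntitoneOn f (Icc x y) := by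
  refine antitoneOn_of_finset_gaps ordConnected_Icc S fun a ha b hb hab hfree => ?_
  have hsub : Ioo a b ⊆ Ioo x y \ S := fun t ht => ⟨Ioo_subset_Ioo ha.1 hb.2 ht, hfree t ht⟩
  refine antitoneOn_of_hasDerivWithinAt_nonpos (f' := f') (convex_Icc a b)
    (hf.mono (Icc_subset_Icc ha.1 hb.2)) (fun t ht => ?_) (fun t ht => ?_)
    (left_mem_Icc.2 hab) (right_mem_Icc.2 hab) hab
  all_goals rw [interior_Icc] at ht
  exacts [(hf' t (hsub ht)).hasDerivWithinAt, hf'₀ t (hsub ht)]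

theorem constant_of_hasDerivWithinAt_Icc_zero {f : ℝ → ℝ} {a b : ℝ}
    (hf : ∀ t ∈ Icc a b, HasDerivWithinAt f 0 (Icc a b) t) : ∀ t ∈ Icc a b, f t = f a :=
  constant_of_has_deriv_right_zero (fun t ht => (hf t ht).continuousWithinAt) fun t ht =>
    (hf t (Ico_subset_Icc_self ht)).mono_of_mem_nhdsWithin (Icc_mem_nhdsGE_of_mem ht)

theorem le_of_hasDerivWithinAt_zero_of_jumps {f : ℝ → ℝ} {x y : ℝ} {S : Finset ℝ}
    (hS : (S : Set ℝ) ⊆ Ioo x y) (hf : ∀ t ∈ Icc x y \ S, HasDerivWithinAt f 0 (Icc x y) t)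
    (hjump : ∀ p ∈ S, ∃ l r, Tendsto f (𝓝[<] p) (𝓝 l) ∧ Tendsto f (𝓝[>] p) (𝓝 r) ∧ l ≤ r) :
    ∀ t ∈ Icc x y \ S, f t ≤ f y := by
  have hconst : ∀ a b, a ∈ Icc x y → b ≤ y → (∀ r ∈ Icc a b, r ∉ S) →
      ∀ r ∈ Icc a b, f r = f a := fun a b ha hb hfree =>
    constant_of_hasDerivWithinAt_Icc_zero fun t ht =>
      (hf t ⟨Icc_subset_Icc ha.1 hb ht, hfree t ht⟩).mono (Icc_subset_Icc ha.1 hb)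
  intro t ht
  obtain ⟨n, hn⟩ : ∃ n, (S.filter (t < ·)).card = n := ⟨_, rfl⟩
  induction n using Nat.strong_induction_on generalizing t with
  | _ n ih =>
  have hfree : ∀ b, (∀ q ∈ S, t < q → b < q) → ∀ r ∈ Icc t b, r ∉ S := fun b hb r hr hrS => by
    rcases hr.1.eq_or_lt with rfl | htr
    exacts [ht.2 hrS, (hb r hrS htr).not_ge hr.2]
  rcases (S.filter (t < ·)).eq_empty_or_nonempty with hemp | hne
  · refine (hconst t y ht.1 le_rfl (hfree y fun q hq htq => ?_) y ⟨ht.1.2, le_rfl⟩).ge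
    exact absurd (Finset.mem_filter.2 ⟨hq, htq⟩) (hemp ▸ Finset.notMem_empty q)
  set p := (S.filter (t < ·)).min' hne
  have hpmem : p ∈ S.filter (t < ·) := Finset.min'_mem _ hne
  obtain ⟨hpS, htp⟩ := Finset.mem_filter.1 hpmem
  have hp := hS hpS
  obtain ⟨l, r, hl, hr, hlr⟩ := hjump p hpS
  have hfl : f t = l := by
    refine tendsto_nhds_unique (tendsto_const_nhds.congr' ?_) hl
    filter_upwards [Ioo_mem_nhdsLT htp] with q hq
    refine (hconst t q ht.1 (hq.2.le.trans hp.2.le) (hfree q fun q' hq' htq' => ?_) q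
      ⟨hq.1.le, le_rfl⟩).symm
    exact hq.2.trans_le (Finset.min'_le _ q' (Finset.mem_filter.2 ⟨hq', htq'⟩))
  have hry : r ≤ f y := by
    refine le_of_tendsto hr ?_
    filter_upwards [Ioo_mem_nhdsGT hp.2,
      nhdsGT_le_nhdsNE p (nhdsNE_le_cofinite p S.finite_toSet.compl_mem_cofinite)] with q hq hqS
    refine ih _ ?_ q ⟨⟨hp.1.le.trans hq.1.le, hq.2.le⟩, hqS⟩ rfl
    have hsub : S.filter (q < ·) ⊆ (S.filter (t < ·)).erase p := fun q' hq' => by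
      obtain ⟨hq'S, hqq'⟩ := Finset.mem_filter.1 hq'
      exact Finset.mem_erase.2 ⟨(hq.1.trans hqq').ne',
        Finset.mem_filter.2 ⟨hq'S, htp.trans (hq.1.trans hqq')⟩⟩
    exact hn ▸ (Finset.card_le_card hsub).trans_lt (Finset.card_erase_lt_of_mem hpmem)
  exact hfl ▸ hlr.trans hry

theorem hasDerivAt_cos_const_sub (y t : ℝ) :
    HasDerivAt (fun s => cos (y - s)) (sin (y - t)) t := by
  simpa using ((hasDerivAt_id t).const_sub y).cos

theorem hasDerivAt_sin_const_sub (y t : ℝ) :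
    HasDerivAt (fun s => sin (y - s)) (-cos (y - t)) t := by
  simpa using ((hasDerivAt_id t).const_sub y).sin

/-- The Wronskian of `cos (y - ·)` and `u`, with `v` standing for `u'`. -/
noncomputable def cosWronskian (u v : ℝ → ℝ) (y t : ℝ) : ℝ :=
  v t * cos (y - t) - u t * sin (y - t)

section cosWronskian

variable {u v : ℝ → ℝ} {y : ℝ}

theorem cosWronskian_self : cosWronskian u v y y = v y := by
  simp [cosWronskian]

theorem hasDerivWithinAt_cosWronskian {s : Set ℝ} {t : ℝ} (hu : HasDerivWithinAt u (v t) s t)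
    (hv : HasDerivWithinAt v (-u t) s t) : HasDerivWithinAt (cosWronskian u v y) 0 s t := by
  have := (hv.mul (hasDerivAt_cos_const_sub y t).hasDerivWithinAt).sub
    (hu.mul (hasDerivAt_sin_const_sub y t).hasDerivWithinAt)
  exact this.congr_deriv (by ring)

theorem tendsto_cosWronskian {l : Filter ℝ} {p a : ℝ} (hl : l ≤ 𝓝 p)
    (hu : Tendsto u l (𝓝 (u p))) (hv : Tendsto v l (𝓝 a)) :
    Tendsto (cosWronskian u v y) l (𝓝 (a * cos (y - p) - u p * sin (y - p))) :=
  have hc : Continuous fun s => y - s := by fun_prop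
  (hv.mul ((continuous_cos.comp hc).tendsto p |>.mono_left hl)).sub
    (hu.mul ((continuous_sin.comp hc).tendsto p |>.mono_left hl))

theorem cosWronskian_jump {p vl vr : ℝ} (hu : ContinuousAt u p) (hcos : 0 ≤ cos (y - p))
    (hl : Tendsto v (𝓝[<] p) (𝓝 vl)) (hr : Tendsto v (𝓝[>] p) (𝓝 vr)) (hlr : vl ≤ vr) :
    ∃ l r, Tendsto (cosWronskian u v y) (𝓝[<] p) (𝓝 l) ∧
      Tendsto (cosWronskian u v y) (𝓝[>] p) (𝓝 r) ∧ l ≤ r :=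
  ⟨_, _, tendsto_cosWronskian nhdsWithin_le_nhds (hu.mono_left nhdsWithin_le_nhds) hl,
    tendsto_cosWronskian nhdsWithin_le_nhds (hu.mono_left nhdsWithin_le_nhds) hr,
    by gcongr⟩

end cosWronskian

theorem stmt_6_general (u v : ℝ → ℝ) (x y : ℝ) (S : Finset ℝ)
    (hwidth : y - x < Real.pi / 2)
    (hS : (S : Set ℝ) ⊆ Set.Ioo x y)
    (hcont : ContinuousOn u (Set.Icc x y))
    (hderiv : ∀ s ∈ Set.Icc x y \ (S : Set ℝ), HasDerivWithinAt u (v s) (Set.Icc x y) s)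
    (hode : ∀ s ∈ Set.Icc x y \ (S : Set ℝ), HasDerivWithinAt v (-u s) (Set.Icc x y) s)
    (hvy : v y = 0)
    (hjump : ∀ s ∈ S, ∃ vl vr : ℝ,
      Tendsto v (nhdsWithin s (Set.Iio s)) (nhds vl) ∧
      Tendsto v (nhdsWithin s (Set.Ioi s)) (nhds vr) ∧ vl ≤ vr) :
    ∀ s ∈ Set.Icc x y, u y * Real.cos (y - s) ≤ u s := by
  have hcos : ∀ t ∈ Icc x y, 0 < cos (y - t) := fun t ht =>
    cos_pos_of_mem_Ioo ⟨by linarith [pi_pos, ht.2], by linarith [ht.1]⟩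
  have hjumpW : ∀ p ∈ S, ∃ l r, Tendsto (cosWronskian u v y) (𝓝[<] p) (𝓝 l) ∧
      Tendsto (cosWronskian u v y) (𝓝[>] p) (𝓝 r) ∧ l ≤ r := fun p hp => by
    obtain ⟨vl, vr, hl, hr, hlr⟩ := hjump p hp
    exact cosWronskian_jump (hcont.continuousAt (Icc_mem_nhds (hS hp).1 (hS hp).2))
      (hcos p (Ioo_subset_Icc_self (hS hp))).le hl hr hlr
  have hW : ∀ t ∈ Icc x y \ S, cosWronskian u v y t ≤ 0 := fun t ht =>
    (le_of_hasDerivWithinAt_zero_of_jumps hS (fun t ht => hasDerivWithinAt_cosWronskian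
      (hderiv t ht) (hode t ht)) hjumpW t ht).trans_eq (by rw [cosWronskian_self, hvy])
  have hanti : AntitoneOn (fun t => u t / cos (y - t)) (Icc x y) := by
    refine antitoneOn_Icc_of_hasDerivAt_nonpos_off_finset S
      (f' := fun t => cosWronskian u v y t / cos (y - t) ^ 2)
      (hcont.div (by fun_prop) fun t ht => (hcos t ht).ne') (fun t ht => ?_) fun t ht =>
        div_nonpos_of_nonpos_of_nonneg (hW t ⟨Ioo_subset_Icc_self ht.1, ht.2⟩) (sq_nonneg _)
    have hu : HasDerivAt u (v t) t :=
      (hderiv t ⟨Ioo_subset_Icc_self ht.1, ht.2⟩).hasDerivAt (Icc_mem_nhds ht.1.1 ht.1.2)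
    exact hu.div (hasDerivAt_cos_const_sub y t) (hcos t (Ioo_subset_Icc_self ht.1)).ne'
  intro s hs
  have h : u y / cos (y - y) ≤ u s / cos (y - s) := hanti hs ⟨hs.1.trans hs.2, le_rfl⟩ hs.2
  rwa [sub_self, cos_zero, div_one, le_div_iff₀ (hcos s hs)] at h

/-- Let `u` be continuous and piecewise `C²` on `[x,y]` (singular set `S ⊆ (x,y)` finite),
with `u ≥ u₀ > 1`, `u'' = -u` at regular points, `u'(y) = 0`, `u` monotone on `[x,y]`,
nonnegative jumps of `u'` at the singular points, and `y - x < π/2`.  Then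
`u(s) ≥ u(y)·cos(y - s)` for all `s ∈ [x,y]`. -/
theorem stmt_6 (u v : ℝ → ℝ) (x y u₀ : ℝ) (S : Finset ℝ)
    (hxy : x < y) (hwidth : y - x < Real.pi / 2)
    (hS : (S : Set ℝ) ⊆ Set.Ioo x y)
    (hcont : ContinuousOn u (Set.Icc x y))
    (hu₀ : 1 < u₀) (hlb : ∀ s ∈ Set.Icc x y, u₀ ≤ u s)
    (hmono : MonotoneOn u (Set.Icc x y))
    (hderiv : ∀ s ∈ Set.Icc x y \ (S : Set ℝ), HasDerivWithinAt u (v s) (Set.Icc x y) s)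
    (hode : ∀ s ∈ Set.Icc x y \ (S : Set ℝ), HasDerivWithinAt v (-u s) (Set.Icc x y) s)
    (hvy : v y = 0)
    (hjump : ∀ s ∈ S, ∃ vl vr : ℝ,
      Tendsto v (nhdsWithin s (Set.Iio s)) (nhds vl) ∧
      Tendsto v (nhdsWithin s (Set.Ioi s)) (nhds vr) ∧ vl ≤ vr) :
    ∀ s ∈ Set.Icc x y, u y * Real.cos (y - s) ≤ u s :=
  stmt_6_general u v x y S hwidth hS hcont hderiv hode hvy hjump
end

section
/- Let u₀ > 1 and let x < y with 0 < y - x < π/2. Suppose u(x), u(y) are real numbers with u₀ ≤ u(x) ≤ u(y) and u(x) ≥ u(y)·cos(y-x). Then arcoth(u(x)) - arcoth(u(y)) ≤ 4(y-x)² · u(x)/(u(x)² - 1) ≤ 4(y-x)² · u₀/(u₀² - 1). -/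
/-- The inverse hyperbolic cotangent, for arguments `> 1`. -/
noncomputable def arcoth (t : ℝ) : ℝ := (1 / 2) * Real.log ((t + 1) / (t - 1))

/-!
`arcoth a - arcoth b = ½ log r` with `r - 1 = 2 (b - a) / ((a - 1)(b + 1))`, so `log r ≤ r - 1` bounds the
difference by `(b - a) / ((a - 1)(b + 1))`. The hypothesis `b cos θ ≤ a` together with
`cos θ ≥ 1 - θ² / 2` gives `b - a ≤ b θ² / 2`, and `b / (b + 1) < 1 < 8a / (a + 1)` turns the resulting
bound `θ² b / (2 (a - 1)(b + 1))` into `4 θ² a / (a² - 1)`.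
Finally `t ↦ t / (t² - 1)` is decreasing on `(1, ∞)`.
-/

open Real

lemma arcoth_sub_arcoth_le {a b : ℝ} (ha : 1 < a) (hb : 1 < b) :
    arcoth a - arcoth b ≤ (b - a) / ((a - 1) * (b + 1)) := by
  have hA : 0 < (a + 1) / (a - 1) := div_pos (by linarith) (by linarith)
  have hB : 0 < (b + 1) / (b - 1) := div_pos (by linarith) (by linarith)
  have ha₁ : a - 1 ≠ 0 := by linarith
  have hb₁ : b - 1 ≠ 0 := by linarith
  have hb₂ : b + 1 ≠ 0 := by linarith
  calc arcoth a - arcoth b = 1 / 2 * log ((a + 1) / (a - 1) / ((b + 1) / (b - 1))) := by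
        rw [arcoth, arcoth, ← mul_sub, log_div hA.ne' hB.ne']
    _ ≤ 1 / 2 * ((a + 1) / (a - 1) / ((b + 1) / (b - 1)) - 1) := by
        gcongr
        exact log_le_sub_one_of_pos (div_pos hA hB)
    _ = (b - a) / ((a - 1) * (b + 1)) := by
        field_simp
        ring

lemma sub_le_mul_sq_div_two_of_mul_cos_le {a b θ : ℝ} (hb : 0 ≤ b) (h : b * cos θ ≤ a) :
    b - a ≤ b * (θ ^ 2 / 2) := by
  nlinarith [mul_le_mul_of_nonneg_left (one_sub_sq_div_two_le_cos (x := θ)) hb]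

lemma arcoth_sub_arcoth_le_of_mul_cos_le {a b θ : ℝ} (ha : 1 < a) (hab : a ≤ b)
    (h : b * cos θ ≤ a) : arcoth a - arcoth b ≤ 4 * θ ^ 2 * (a / (a ^ 2 - 1)) := by
  have hb : 1 < b := ha.trans_le hab
  calc arcoth a - arcoth b ≤ (b - a) / ((a - 1) * (b + 1)) := arcoth_sub_arcoth_le ha hb
    _ ≤ b * (θ ^ 2 / 2) / ((a - 1) * (b + 1)) := by
        gcongr
        exact sub_le_mul_sq_div_two_of_mul_cos_le (by linarith) h
    _ = θ ^ 2 / 2 * (b / ((a - 1) * (b + 1))) := by ring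
    _ ≤ θ ^ 2 / 2 * (8 * a / ((a - 1) * (a + 1))) := by
        refine mul_le_mul_of_nonneg_left ?_ (by positivity)
        rw [div_le_div_iff₀ (by nlinarith) (by nlinarith)]
        have : b * (a + 1) ≤ 8 * a * (b + 1) := by nlinarith
        nlinarith [mul_le_mul_of_nonneg_left this (sub_nonneg.2 ha.le)]
    _ = 4 * θ ^ 2 * (a / (a ^ 2 - 1)) := by ring

lemma div_sq_sub_one_le_div_sq_sub_one {a b : ℝ} (ha : 1 < a) (hab : a ≤ b) :
    b / (b ^ 2 - 1) ≤ a / (a ^ 2 - 1) := by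
  rw [div_le_div_iff₀ (by nlinarith) (by nlinarith)]
  nlinarith [mul_nonneg (sub_nonneg.2 hab) (show 0 ≤ a * b + 1 by nlinarith)]

theorem stmt_7_general (u₀ x y ux uy : ℝ) (hu₀ : 1 < u₀)
    (h1 : u₀ ≤ ux) (h2 : ux ≤ uy) (h3 : uy * Real.cos (y - x) ≤ ux) :
    arcoth ux - arcoth uy ≤ 4 * (y - x) ^ 2 * (ux / (ux ^ 2 - 1)) ∧
    4 * (y - x) ^ 2 * (ux / (ux ^ 2 - 1)) ≤ 4 * (y - x) ^ 2 * (u₀ / (u₀ ^ 2 - 1)) :=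
  ⟨arcoth_sub_arcoth_le_of_mul_cos_le (hu₀.trans_le h1) h2 h3,
    mul_le_mul_of_nonneg_left (div_sq_sub_one_le_div_sq_sub_one hu₀ h1) (by positivity)⟩

/-- If `u₀ > 1`, `0 < y - x < π/2`, `u₀ ≤ u(x) ≤ u(y)` and `u(x) ≥ u(y)·cos(y-x)`, then
`arcoth(u(x)) - arcoth(u(y)) ≤ 4(y-x)²·u(x)/(u(x)²-1) ≤ 4(y-x)²·u₀/(u₀²-1)`. -/
theorem stmt_7 (u₀ x y ux uy : ℝ) (hu₀ : 1 < u₀) (hxy : x < y) (hxy' : y - x < Real.pi / 2)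
    (h1 : u₀ ≤ ux) (h2 : ux ≤ uy) (h3 : uy * Real.cos (y - x) ≤ ux) :
    arcoth ux - arcoth uy ≤ 4 * (y - x) ^ 2 * (ux / (ux ^ 2 - 1)) ∧
    4 * (y - x) ^ 2 * (ux / (ux ^ 2 - 1)) ≤ 4 * (y - x) ^ 2 * (u₀ / (u₀ ^ 2 - 1)) :=
  stmt_7_general u₀ x y ux uy hu₀ h1 h2 h3
end

section
/- Let u : [y,x] → ℝ be continuous and piecewise C² with u'(y) = 0 (at the local maximum y), u'' = -1 on regular points, and nonnegative jumps of u' at singular points. Then for all s ∈ [0, x-y], u(y+s) ≥ u(y) - s²/2; in particular u(y) - u(x) ≤ (x-y)²/2. -/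
open Set Filter Topology

/-!
Off the singular set `v' = -1`, so `t ↦ v t + t` is locally constant there, and at the singular
points it can only jump up; hence `v t ≥ v y + y - t = y - t`. Then `w t = u t + (t - y) ^ 2 / 2`
has derivative `v t + (t - y) ≥ 0` off finitely many points, and being continuous it is
nondecreasing on `[y, x]`. The claim is `w y ≤ w (y + s)`.
-/

theorem sdiff_finite_mem_nhdsWithin {X : Type*} [TopologicalSpace X] [T1Space X] {x : X}
    {U s t : Set X} (hU : U ∈ 𝓝[t] x) (hxt : x ∉ t) (hs : s.Finite) : U \ s ∈ 𝓝[t] x := by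
  have : Finite s := hs.to_subtype
  have hs' : sᶜ ∈ 𝓝[≠] x := by
    simpa only [compl_eq_univ_sdiff] using nhdsNE_of_nhdsNE_sdiff_finite univ_mem this
  exact inter_mem hU (nhdsWithin_mono x (subset_compl_singleton_iff.2 hxt) hs')

section Order

variable {α β : Type*} [LinearOrder α] [TopologicalSpace α] [OrderTopology α] [DenselyOrdered α]
  [Preorder β] [TopologicalSpace β] [OrderClosedTopology β] {f : α → β} {s t : Set α}

theorem MonotoneOn.le_of_continuousWithinAt_Ioi {p q : α} (hf : MonotoneOn f s)
    (hs : s ∈ 𝓝[>] p) (hcont : ContinuousWithinAt f (Ioi p) p) (hq : q ∈ s) (hpq : p < q) :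
    f p ≤ f q :=
  have := nhdsGT_neBot_of_exists_gt ⟨q, hpq⟩
  le_of_tendsto hcont <| by
    filter_upwards [hs, Ioo_mem_nhdsGT hpq] with z hz hz' using hf hz hq hz'.2.le

theorem MonotoneOn.union_of_tendsto_le {m : α} {l r : β} (hs : MonotoneOn f s)
    (ht : MonotoneOn f t) (hs_lt : s ⊆ Iio m) (ht_gt : t ⊆ Ioi m) (hs_mem : s ∈ 𝓝[<] m)
    (ht_mem : t ∈ 𝓝[>] m) (hl : Tendsto f (𝓝[<] m) (𝓝 l)) (hr : Tendsto f (𝓝[>] m) (𝓝 r))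
    (hlr : l ≤ r) : MonotoneOn f (s ∪ t) := by
  have hle_l : ∀ p ∈ s, f p ≤ l := fun p hp =>
    have := nhdsLT_neBot_of_exists_lt ⟨p, hs_lt hp⟩
    ge_of_tendsto hl <| by
      filter_upwards [hs_mem, Ioo_mem_nhdsLT (hs_lt hp)] with z hz hz' using hs hp hz hz'.1.le
  have hr_le : ∀ q ∈ t, r ≤ f q := fun q hq =>
    have := nhdsGT_neBot_of_exists_gt ⟨q, ht_gt hq⟩
    le_of_tendsto hr <| by
      filter_upwards [ht_mem, Ioo_mem_nhdsGT (ht_gt hq)] with z hz hz' using ht hz hq hz'.2.le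
  rintro p (hp | hp) q (hq | hq) hpq
  · exact hs hp hq hpq
  · exact (hle_l p hp).trans (hlr.trans (hr_le q hq))
  · exact absurd ((ht_gt hp).trans_le hpq) (not_lt.2 (hs_lt hq).le)
  · exact ht hp hq hpq

theorem MonotoneOn.Icc_of_Ioo_sdiff_finite {a b : α} {S : Set α} (hS : S.Finite)
    (hmono : MonotoneOn f (Ioo a b \ S)) (hf : ContinuousOn f (Icc a b)) :
    MonotoneOn f (Icc a b) := by
  intro p hp q hq hpq
  rcases hpq.eq_or_lt with rfl | hpq
  · exact le_rfl
  have hD_gt : Ioo a b \ S ∈ 𝓝[>] p :=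
    sdiff_finite_mem_nhdsWithin (Ioo_mem_nhdsGT_of_mem ⟨hp.1, hpq.trans_le hq.2⟩) (lt_irrefl p) hS
  have hD_lt : Ioo a b \ S ∈ 𝓝[<] q :=
    sdiff_finite_mem_nhdsWithin (Ioo_mem_nhdsLT_of_mem ⟨hp.1.trans_lt hpq, hq.2⟩) (lt_irrefl q) hS
  have hp_le : ∀ z ∈ Ioo a b \ S, p < z → f p ≤ f z := fun z hz hpz =>
    hmono.le_of_continuousWithinAt_Ioi hD_gt
      ((hf p hp).mono_of_mem_nhdsWithin (Icc_mem_nhdsGT_of_mem ⟨hp.1, hpq.trans_le hq.2⟩)) hz hpz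
  have := nhdsLT_neBot_of_exists_lt ⟨p, hpq⟩
  refine ge_of_tendsto ((hf q hq).mono_of_mem_nhdsWithin
    (Icc_mem_nhdsLT_of_mem ⟨hp.1.trans_lt hpq, hq.2⟩)) ?_
  filter_upwards [hD_lt, Ioo_mem_nhdsLT hpq] with z hz hz' using hp_le z hz hz'.1

end Order

def HasNonnegJumpAt (f : ℝ → ℝ) (s : ℝ) : Prop :=
  ∃ l r : ℝ, Tendsto f (𝓝[<] s) (𝓝 l) ∧ Tendsto f (𝓝[>] s) (𝓝 r) ∧ l ≤ r

theorem ContinuousAt.hasNonnegJumpAt {f : ℝ → ℝ} {s : ℝ} (hf : ContinuousAt f s) :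
    HasNonnegJumpAt f s :=
  ⟨f s, f s, hf.tendsto.mono_left nhdsWithin_le_nhds, hf.tendsto.mono_left nhdsWithin_le_nhds,
    le_rfl⟩

theorem HasNonnegJumpAt.add_continuousAt {f g : ℝ → ℝ} {s : ℝ} (hf : HasNonnegJumpAt f s)
    (hg : ContinuousAt g s) : HasNonnegJumpAt (fun t => f t + g t) s := by
  obtain ⟨l, r, hl, hr, hlr⟩ := hf
  exact ⟨l + g s, r + g s, hl.add (hg.tendsto.mono_left nhdsWithin_le_nhds),
    hr.add (hg.tendsto.mono_left nhdsWithin_le_nhds), by linarith⟩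

theorem monotoneOn_Ioo_of_hasDerivAt_nonneg {f f' : ℝ → ℝ} {a b : ℝ}
    (hf : ∀ z ∈ Ioo a b, HasDerivAt f (f' z) z) (hf' : ∀ z ∈ Ioo a b, 0 ≤ f' z) :
    MonotoneOn f (Ioo a b) := by
  refine monotoneOn_of_hasDerivWithinAt_nonneg (f' := f') (convex_Ioo a b)
    (fun z hz => (hf z hz).continuousAt.continuousWithinAt) (fun z hz => ?_) (fun z hz => ?_)
  · rw [interior_Ioo] at hz ⊢
    exact (hf z hz).hasDerivWithinAt
  · exact hf' z (interior_subset hz)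

theorem monotoneOn_Ioo_sdiff_of_hasDerivAt_nonneg {f f' : ℝ → ℝ} {a b : ℝ} {S : Finset ℝ}
    (hf : ∀ z ∈ Ioo a b \ S, HasDerivAt f (f' z) z) (hf' : ∀ z ∈ Ioo a b \ S, 0 ≤ f' z)
    (hjump : ∀ s ∈ S, HasNonnegJumpAt f s) : MonotoneOn f (Ioo a b \ S) := by
  induction S using Finset.induction_on_max generalizing b with
  | empty =>
    simp only [Finset.coe_empty, sdiff_empty] at hf hf' ⊢
    exact monotoneOn_Ioo_of_hasDerivAt_nonneg hf hf'
  | insert m S hlt ih =>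
    have hjumpS : ∀ s ∈ S, HasNonnegJumpAt f s := fun s hs => hjump s (Finset.mem_insert_of_mem hs)
    by_cases hm : m ∈ Ioo a b
    · have hleft_mem : ∀ z ∈ Ioo a m \ S, z ∈ Ioo a b \ ↑(insert m S) := fun z hz =>
        ⟨⟨hz.1.1, hz.1.2.trans hm.2⟩, by simpa [hz.1.2.ne] using hz.2⟩
      have hright_mem : ∀ z ∈ Ioo m b, z ∈ Ioo a b \ ↑(insert m S) := fun z hz =>
        ⟨⟨hm.1.trans hz.1, hz.2⟩, by
          simpa [hz.1.ne'] using fun hzS => (hlt z hzS).not_gt hz.1⟩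
      have hleft : MonotoneOn f (Ioo a m \ S) :=
        ih (fun z hz => hf z (hleft_mem z hz)) (fun z hz => hf' z (hleft_mem z hz)) hjumpS
      have hright : MonotoneOn f (Ioo m b) := monotoneOn_Ioo_of_hasDerivAt_nonneg
        (fun z hz => hf z (hright_mem z hz)) (fun z hz => hf' z (hright_mem z hz))
      obtain ⟨l, r, hl, hr, hlr⟩ := hjump m (Finset.mem_insert_self m S)
      refine (hleft.union_of_tendsto_le hright (fun z hz => hz.1.2) (fun z hz => hz.1)
        (sdiff_finite_mem_nhdsWithin (Ioo_mem_nhdsLT hm.1) (lt_irrefl m) S.finite_toSet)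
        (Ioo_mem_nhdsGT hm.2) hl hr hlr).mono ?_
      rintro z ⟨hz, hzS⟩
      simp only [Finset.coe_insert, mem_insert_iff, not_or] at hzS
      rcases lt_or_gt_of_ne hzS.1 with hzm | hzm
      · exact Or.inl ⟨⟨hz.1, hzm⟩, hzS.2⟩
      · exact Or.inr ⟨hzm, hz.2⟩
    · have hmem : ∀ z ∈ Ioo a b \ S, z ∈ Ioo a b \ ↑(insert m S) := fun z hz =>
        ⟨hz.1, by simpa [show z ≠ m from fun h => hm (h ▸ hz.1)] using hz.2⟩
      exact (ih (fun z hz => hf z (hmem z hz)) (fun z hz => hf' z (hmem z hz)) hjumpS).mono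
        (sdiff_subset_sdiff_right (by simp))

theorem sub_sub_le_of_hasDerivWithinAt_neg_one {v : ℝ → ℝ} {a b : ℝ} {S : Finset ℝ}
    (hab : a < b) (hS : (S : Set ℝ) ⊆ Ioo a b)
    (hv : ∀ z ∈ Icc a b \ (S : Set ℝ), HasDerivWithinAt v (-1) (Icc a b) z)
    (hjump : ∀ s ∈ S, HasNonnegJumpAt v s) :
    ∀ t ∈ Ioo a b \ (S : Set ℝ), v a - (t - a) ≤ v t := by
  have hmono : MonotoneOn (fun t => v t + t) (Ioo a b \ S) :=
    monotoneOn_Ioo_sdiff_of_hasDerivAt_nonneg (f' := 0)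
      (fun z hz => (((hv z ⟨Ioo_subset_Icc_self hz.1, hz.2⟩).hasDerivAt
        (Icc_mem_nhds hz.1.1 hz.1.2)).add (hasDerivAt_id' z)).congr_deriv (neg_add_cancel 1))
      (fun _ _ => le_rfl) (fun s hs => (hjump s hs).add_continuousAt continuousAt_id)
  have hcont : ContinuousWithinAt (fun t => v t + t) (Ioi a) a :=
    ((hv a ⟨left_mem_Icc.2 hab.le, fun h => (hS h).1.false⟩).continuousWithinAt.add
      continuousWithinAt_id).mono_of_mem_nhdsWithin (Icc_mem_nhdsGT hab)
  intro t ht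
  have := hmono.le_of_continuousWithinAt_Ioi
    (sdiff_finite_mem_nhdsWithin (Ioo_mem_nhdsGT hab) (lt_irrefl a) S.finite_toSet) hcont ht ht.1.1
  linarith

theorem monotoneOn_add_sq_div_two {u v : ℝ → ℝ} {a b : ℝ} {S : Finset ℝ}
    (hS : (S : Set ℝ) ⊆ Ioo a b) (hu : ContinuousOn u (Icc a b))
    (hu' : ∀ z ∈ Icc a b \ (S : Set ℝ), HasDerivWithinAt u (v z) (Icc a b) z)
    (hv : ∀ t ∈ Ioo a b \ (S : Set ℝ), a - t ≤ v t) :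
    MonotoneOn (fun t => u t + (t - a) ^ 2 / 2) (Icc a b) := by
  refine MonotoneOn.Icc_of_Ioo_sdiff_finite S.finite_toSet ?_ (hu.add (by fun_prop))
  refine monotoneOn_Ioo_sdiff_of_hasDerivAt_nonneg (f' := fun t => v t + (t - a))
    (fun z hz => ?_) (fun z hz => by linarith [hv z hz]) (fun s hs => ?_)
  · exact (((hu' z ⟨Ioo_subset_Icc_self hz.1, hz.2⟩).hasDerivAt (Icc_mem_nhds hz.1.1 hz.1.2)).add
      ((((hasDerivAt_id' z).sub_const a).pow 2).div_const 2)).congr_deriv (by ring)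
  · exact ((hu.continuousAt (Icc_mem_nhds (hS hs).1 (hS hs).2)).add
      (by fun_prop)).hasNonnegJumpAt

/-- Let `u` be continuous and piecewise `C²` on `[y,x]` (singular set `S ⊆ (y,x)` finite),
with `u'(y) = 0`, `u'' = -1` at regular points, and nonnegative jumps of `u'` at the
singular points.  Then `u(y+s) ≥ u(y) - s²/2` for all `s ∈ [0, x-y]`; in particular
`u(y) - u(x) ≤ (x-y)²/2`. -/
theorem stmt_8 (u v : ℝ → ℝ) (y x : ℝ) (S : Finset ℝ)
    (hyx : y < x)
    (hS : (S : Set ℝ) ⊆ Set.Ioo y x)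
    (hcont : ContinuousOn u (Set.Icc y x))
    (hderiv : ∀ s ∈ Set.Icc y x \ (S : Set ℝ), HasDerivWithinAt u (v s) (Set.Icc y x) s)
    (hode : ∀ s ∈ Set.Icc y x \ (S : Set ℝ), HasDerivWithinAt v (-1) (Set.Icc y x) s)
    (hvy : v y = 0)
    (hjump : ∀ s ∈ S, ∃ vl vr : ℝ,
      Tendsto v (nhdsWithin s (Set.Iio s)) (nhds vl) ∧
      Tendsto v (nhdsWithin s (Set.Ioi s)) (nhds vr) ∧ vl ≤ vr) :
    (∀ s ∈ Set.Icc 0 (x - y), u y - s ^ 2 / 2 ≤ u (y + s)) ∧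
    u y - u x ≤ (x - y) ^ 2 / 2 := by
  have hv : ∀ t ∈ Ioo y x \ (S : Set ℝ), y - t ≤ v t := fun t ht => by
    simpa [hvy] using sub_sub_le_of_hasDerivWithinAt_neg_one hyx hS hode hjump t ht
  have hw := monotoneOn_add_sq_div_two hS hcont hderiv hv
  have hbound : ∀ s ∈ Icc 0 (x - y), u y - s ^ 2 / 2 ≤ u (y + s) := fun s hs => by
    have := hw (left_mem_Icc.2 hyx.le) ⟨by linarith [hs.1], by linarith [hs.2]⟩
      (by linarith [hs.1] : y ≤ y + s)
    simp only [sub_self, add_sub_cancel_left] at this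
    linarith
  have hx := hbound (x - y) ⟨sub_nonneg.2 hyx.le, le_rfl⟩
  rw [add_sub_cancel] at hx
  exact ⟨hbound, by linarith⟩
end
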